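/- Let X > 1, λ > 0, H ≤ X^{1/(6(1+2λ))}, x ∈ [X, 2X], and y = 2√x·H + H². Then the number of pairs (a, b) of positive integers with b squarefree, b > X^{1/3}/H^λ, and x < a²b³ ≤ x + y is at most 2H^{3λ/2}. -/

import Mathlib

/-!
Write `X = u⁶`, `x = r⁶`, `B = X^{1/3}/H^λ` and `t = H^{3λ/2}`, so that `B³t² = X` and
`x + y = (r³ + H)²`. Since `H ≤ X^{1/6}`, a pair `(a, b)` in the window is determined by `b`
(the numbers `a b^{3/2}` are spaced by `b^{3/2} > B^{3/2} ≥ H`, the length of the window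
`(√x, √x + H]`), and also by `a` (the gaps `a²((b+1)³ - b³) > 3a²b² > 3x^{2/3}` exceed `y`).
If `u ≥ 4/3` then `√x + H ≤ 2√X`, so `a²B³ ≤ 4X = 4B³t²` forces `a ≤ 2t`; if `u ≤ 4/3` then
`b³ ≤ x + y < 27` leaves only `b ∈ {1, 2}`, and `2 ≤ 2t`.
-/

open Real

noncomputable def powerfulPairs (B x y : ℝ) : Finset (ℕ × ℕ) :=
  (Finset.Icc 1 ⌊x + y⌋₊ ×ˢ Finset.Icc 1 ⌊x + y⌋₊).filter
    (fun p : ℕ × ℕ => Squarefree p.2 ∧ B < (p.2 : ℝ) ∧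
      x < ((p.1 ^ 2 * p.2 ^ 3 : ℕ) : ℝ) ∧ ((p.1 ^ 2 * p.2 ^ 3 : ℕ) : ℝ) ≤ x + y)

section powerfulPairs

variable {B x y : ℝ} {p : ℕ × ℕ}

lemma bounds_of_mem_powerfulPairs (hp : p ∈ powerfulPairs B x y) :
    1 ≤ p.1 ∧ 1 ≤ p.2 ∧ B < p.2 ∧ x < (p.1 : ℝ) ^ 2 * (p.2 : ℝ) ^ 3 ∧
      (p.1 : ℝ) ^ 2 * (p.2 : ℝ) ^ 3 ≤ x + y := by
  simp only [powerfulPairs, Finset.mem_filter, Finset.mem_product, Finset.mem_Icc,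
    Nat.cast_mul, Nat.cast_pow] at hp
  exact ⟨hp.1.1.1, hp.1.2.1, hp.2.2.1, hp.2.2.2⟩

lemma snd_cube_le_of_mem_powerfulPairs (hp : p ∈ powerfulPairs B x y) :
    (p.2 : ℝ) ^ 3 ≤ x + y := by
  obtain ⟨ha, -, -, -, hle⟩ := bounds_of_mem_powerfulPairs hp
  have ha' : (1 : ℝ) ≤ (p.1 : ℝ) ^ 2 := one_le_pow₀ (by exact_mod_cast ha)
  nlinarith [pow_nonneg (Nat.cast_nonneg (α := ℝ) p.2) 3]

lemma fst_sq_mul_cube_le_of_mem_powerfulPairs (hB : 0 ≤ B) (hp : p ∈ powerfulPairs B x y) :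
    (p.1 : ℝ) ^ 2 * B ^ 3 ≤ x + y := by
  obtain ⟨-, -, hb, -, hle⟩ := bounds_of_mem_powerfulPairs hp
  calc (p.1 : ℝ) ^ 2 * B ^ 3 ≤ (p.1 : ℝ) ^ 2 * (p.2 : ℝ) ^ 3 := by gcongr
    _ ≤ x + y := hle

/-- For fixed `b`, consecutive values of `a * b^{3/2}` are more than `H` apart, so at most one
lies in the window `(s, s + H]`. -/
lemma injOn_snd_powerfulPairs {s H : ℝ} (hB : 0 ≤ B)
    (hHB : H ^ 2 ≤ B ^ 3) (hsx : s ^ 2 ≤ x) (hxy : x + y ≤ (s + H) ^ 2) :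
    Set.InjOn Prod.snd (powerfulPairs B x y : Set (ℕ × ℕ)) := by
  suffices key : ∀ p ∈ powerfulPairs B x y, ∀ q ∈ powerfulPairs B x y, p.2 = q.2 → q.1 ≤ p.1 from
    fun p hp q hq h => Prod.ext (le_antisymm (key q hq p hp h.symm) (key p hp q hq h)) h
  intro p hp q hq hpq
  obtain ⟨-, -, hpB, hpx, -⟩ := bounds_of_mem_powerfulPairs hp
  obtain ⟨-, -, -, -, hqx⟩ := bounds_of_mem_powerfulPairs hq
  rw [← hpq] at hqx
  by_contra! hlt
  have hsucc : (p.1 : ℝ) + 1 ≤ q.1 := by exact_mod_cast hlt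
  set a : ℝ := (p.1 : ℝ)
  set β : ℝ := (p.2 : ℝ) ^ 3
  have hβ : H ^ 2 < β := hHB.trans_lt (pow_lt_pow_left₀ hpB hB three_ne_zero)
  have ha : 0 ≤ a := Nat.cast_nonneg _
  have hsH : s * H < a * β := by
    refine lt_of_pow_lt_pow_left₀ 2 (by positivity) ?_
    calc (s * H) ^ 2 = s ^ 2 * H ^ 2 := by ring
      _ ≤ s ^ 2 * β := by gcongr
      _ < a ^ 2 * β * β := mul_lt_mul_of_pos_right (hsx.trans_lt hpx) ((sq_nonneg H).trans_lt hβ)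
      _ = (a * β) ^ 2 := by ring
  have : (a + 1) ^ 2 * β ≤ (q.1 : ℝ) ^ 2 * β := by gcongr
  nlinarith

/-- For fixed `a ≥ 1`, `a²((b+1)³ - b³) > 3a²b² ≥ 3(a²b³)^{2/3}`, so the window `(x, x + y]` with
`y ≤ 3x^{2/3}` contains `a²b³` for at most one `b`. -/
lemma injOn_fst_powerfulPairs {w : ℝ} (hx : 0 ≤ x) (hw : w ^ 3 ≤ x ^ 2) (hy : y ≤ 3 * w) :
    Set.InjOn Prod.fst (powerfulPairs B x y : Set (ℕ × ℕ)) := by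
  suffices key : ∀ p ∈ powerfulPairs B x y, ∀ q ∈ powerfulPairs B x y, p.1 = q.1 → q.2 ≤ p.2 from
    fun p hp q hq h => Prod.ext h (le_antisymm (key q hq p hp h.symm) (key p hp q hq h))
  intro p hp q hq hpq
  obtain ⟨hp1, -, -, hpx, -⟩ := bounds_of_mem_powerfulPairs hp
  obtain ⟨-, -, -, -, hqx⟩ := bounds_of_mem_powerfulPairs hq
  rw [← hpq] at hqx
  by_contra! hlt
  have hsucc : (p.2 : ℝ) + 1 ≤ q.2 := by exact_mod_cast hlt
  set a : ℝ := (p.1 : ℝ)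
  set b : ℝ := (p.2 : ℝ)
  have ha : 1 ≤ a := Nat.one_le_cast.mpr hp1
  have hb : 0 ≤ b := Nat.cast_nonneg _
  have hab : w < a ^ 2 * b ^ 2 := by
    refine lt_of_pow_lt_pow_left₀ 3 (by positivity) ?_
    calc w ^ 3 ≤ x ^ 2 := hw
      _ < (a ^ 2 * b ^ 3) ^ 2 := by gcongr
      _ ≤ (a ^ 2 * b ^ 2) ^ 3 := by
        have : a ^ 4 ≤ a ^ 6 := pow_le_pow_right₀ ha (by norm_num)
        calc (a ^ 2 * b ^ 3) ^ 2 = a ^ 4 * b ^ 6 := by ring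
          _ ≤ a ^ 6 * b ^ 6 := by gcongr
          _ = (a ^ 2 * b ^ 2) ^ 3 := by ring
  have : a ^ 2 * (b + 1) ^ 3 ≤ a ^ 2 * (q.2 : ℝ) ^ 3 := by gcongr
  nlinarith [mul_nonneg (sq_nonneg a) hb]

end powerfulPairs

lemma card_le_of_injOn_of_le {α : Type*} {s : Finset α} (f : α → ℕ) {m : ℝ} (hm : 0 ≤ m)
    (hf : Set.InjOn f s) (hfs : ∀ a ∈ s, 1 ≤ f a ∧ (f a : ℝ) ≤ m) : (s.card : ℝ) ≤ m := by
  have hcard : s.card ≤ (Finset.Icc 1 ⌊m⌋₊).card :=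
    Finset.card_le_card_of_injOn f (fun a ha => Finset.mem_Icc.mpr
      ⟨(hfs a ha).1, Nat.le_floor (hfs a ha).2⟩) hf
  rw [Nat.card_Icc, Nat.add_sub_cancel] at hcard
  exact (Nat.cast_le.mpr hcard).trans (Nat.floor_le hm)

-- The split point `u = 4/3` works because this bound needs `√2 u³ + u < √27` (true for
-- `u < 1.38`) and the next one needs `u² ≥ 1 + 1/√2` (true for `u > 1.31`).
lemma add_sq_lt_27 {s H u : ℝ} (hs : 0 ≤ s) (hH : 0 ≤ H) (hHu : H ≤ u) (hsu : s ^ 2 ≤ 2 * u ^ 6)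
    (hu : u ≤ 4 / 3) : (s + H) ^ 2 < 27 := by
  have hu6 : u ^ 6 ≤ (4 / 3) ^ 6 := pow_le_pow_left₀ (hH.trans hHu) hu 6
  have hs' : s ≤ 7 / 2 := by nlinarith
  nlinarith

lemma add_sq_le_four_mul_pow_six {s H u : ℝ} (hs : 0 ≤ s) (hH : 0 ≤ H) (hHu : H ≤ u)
    (hsu : s ^ 2 ≤ 2 * u ^ 6) (hu : 4 / 3 ≤ u) : (s + H) ^ 2 ≤ 4 * u ^ 6 := by
  have hu2 : 16 / 9 ≤ u ^ 2 := by nlinarith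
  have hs' : s ≤ 2 * u ^ 3 - u := by
    refine abs_le_of_sq_le_sq' ?_ (by nlinarith) |>.2
    nlinarith [mul_nonneg (sq_nonneg u) (by nlinarith : (0 : ℝ) ≤ 2 * u ^ 4 - 4 * u ^ 2 + 1)]
  nlinarith

theorem card_powerfulPairs_le {u r H B t : ℝ} (hu : 1 ≤ u) (hH : 0 ≤ H) (hHu : H ≤ u)
    (hur : u ≤ r) (hru : r ^ 6 ≤ 2 * u ^ 6) (hB : 0 < B) (ht : 1 ≤ t)
    (hBt : B ^ 3 * t ^ 2 = u ^ 6) (hHt : H ^ 2 * t ^ 2 ≤ u ^ 6) :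
    ((powerfulPairs B (r ^ 6) (2 * r ^ 3 * H + H ^ 2)).card : ℝ) ≤ 2 * t := by
  have hr : 1 ≤ r := hu.trans hur
  have hxy : r ^ 6 + (2 * r ^ 3 * H + H ^ 2) = (r ^ 3 + H) ^ 2 := by ring
  have hru' : (r ^ 3) ^ 2 ≤ 2 * u ^ 6 := by rwa [← pow_mul]
  rcases le_total u (4 / 3) with hsmall | hlarge
  · have hHB : H ^ 2 ≤ B ^ 3 := le_of_mul_le_mul_right (hHt.trans hBt.ge) (by positivity)
    refine (card_le_of_injOn_of_le Prod.snd zero_le_two ?_ fun p hp => ⟨?_, ?_⟩).trans (by linarith)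
    · exact injOn_snd_powerfulPairs hB.le hHB (by rw [← pow_mul]) hxy.le
    · exact (bounds_of_mem_powerfulPairs hp).2.1
    · have hb := (snd_cube_le_of_mem_powerfulPairs hp).trans_lt
        (hxy ▸ add_sq_lt_27 (by positivity) hH hHu hru' hsmall)
      have : (p.2 : ℝ) < 3 := lt_of_pow_lt_pow_left₀ 3 (by norm_num) (by linarith)
      exact_mod_cast Nat.le_of_lt_succ (by exact_mod_cast this)
  · refine card_le_of_injOn_of_le Prod.fst (by positivity) ?_ fun p hp => ⟨?_, ?_⟩
    · have hH2 : H ^ 2 ≤ r ^ 2 := pow_le_pow_left₀ hH (hHu.trans hur) 2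
      refine injOn_fst_powerfulPairs (w := r ^ 4) (by positivity) (le_of_eq (by ring)) ?_
      nlinarith [pow_le_pow_right₀ hr (show 2 ≤ 4 by norm_num), pow_nonneg (zero_le_one.trans hr) 3]
    · exact (bounds_of_mem_powerfulPairs hp).1
    · have ha := (fst_sq_mul_cube_le_of_mem_powerfulPairs hB.le hp).trans
        (hxy ▸ add_sq_le_four_mul_pow_six (by positivity) hH hHu hru' hlarge)
      rw [← hBt] at ha
      have : (p.1 : ℝ) ^ 2 ≤ (2 * t) ^ 2 := by nlinarith [pow_pos hB 3]
      exact (pow_le_pow_iff_left₀ (by positivity) (by positivity) two_ne_zero).mp this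

lemma rpow_one_third_div_rpow_cube_mul_sq {X H lam : ℝ} (hX : 0 ≤ X) (hH : 0 < H) :
    (X ^ ((1 : ℝ) / 3) / H ^ lam) ^ 3 * (H ^ (3 * lam / 2)) ^ 2 = X := by
  have hX3 : (X ^ ((1 : ℝ) / 3)) ^ 3 = X := by
    rw [← rpow_natCast, ← rpow_mul hX]; norm_num
  have hH3 : (H ^ lam) ^ 3 = (H ^ (3 * lam / 2)) ^ 2 := by
    rw [← rpow_natCast, ← rpow_natCast, ← rpow_mul hH.le, ← rpow_mul hH.le]; ring_nf
  rw [div_pow, hX3, hH3, div_mul_cancel₀ _ (by positivity)]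

lemma sq_mul_rpow_sq_le_of_le_rpow {X H lam : ℝ} (hX : 1 ≤ X) (hH : 0 < H) (hlam : 0 ≤ lam)
    (hHX : H ≤ X ^ (1 / (6 * (1 + 2 * lam)))) : H ^ 2 * (H ^ (3 * lam / 2)) ^ 2 ≤ X := by
  have hpow : H ^ 2 * (H ^ (3 * lam / 2)) ^ 2 = H ^ (2 + 3 * lam) := by
    rw [rpow_add hH, ← rpow_natCast (H ^ (3 * lam / 2)), ← rpow_mul hH.le]; norm_num
  calc H ^ 2 * (H ^ (3 * lam / 2)) ^ 2 = H ^ (2 + 3 * lam) := hpow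
    _ ≤ (X ^ (1 / (6 * (1 + 2 * lam)))) ^ (2 + 3 * lam) := by gcongr
    _ = X ^ ((2 + 3 * lam) / (6 * (1 + 2 * lam))) := by
      rw [← rpow_mul (by linarith)]; ring_nf
    _ ≤ X ^ (1 : ℝ) := by
      gcongr
      rw [div_le_one (by positivity)]; linarith
    _ = X := rpow_one X

/-- The number of pairs `(a, b)` of positive integers with `b` squarefree,
`b > X^{1/3}/H^λ`, and `x < a² b³ ≤ x + y` is at most `2 H^{3λ/2}`. -/
theorem large_b_count (X lam H x : ℝ)
    (hX : 1 < X) (hlam : 0 < lam) (hH : 1 ≤ H)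
    (hHX : H ≤ X ^ (1 / (6 * (1 + 2 * lam))))
    (hx : x ∈ Set.Icc X (2 * X)) :
    (((Finset.Icc 1 ⌊x + (2 * Real.sqrt x * H + H ^ 2)⌋₊ ×ˢ
        Finset.Icc 1 ⌊x + (2 * Real.sqrt x * H + H ^ 2)⌋₊).filter
      (fun p : ℕ × ℕ => Squarefree p.2 ∧ X ^ ((1 : ℝ) / 3) / H ^ lam < (p.2 : ℝ) ∧
        x < ((p.1 ^ 2 * p.2 ^ 3 : ℕ) : ℝ) ∧
        ((p.1 ^ 2 * p.2 ^ 3 : ℕ) : ℝ) ≤ x + (2 * Real.sqrt x * H + H ^ 2))).card : ℝ) ≤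
      2 * H ^ (3 * lam / 2) := by
  obtain ⟨hXx, hx2X⟩ := hx
  have hX0 : 0 < X := by linarith
  have hH0 : 0 < H := by linarith
  have hroot {z : ℝ} (hz : 0 ≤ z) : (z ^ (6 : ℝ)⁻¹) ^ 6 = z := by
    simpa using rpow_inv_natCast_pow hz (n := 6) (by norm_num)
  have hsqrt : √x = (x ^ (6 : ℝ)⁻¹) ^ 3 := by
    rw [sqrt_eq_rpow, ← rpow_natCast, ← rpow_mul (by linarith)]; norm_num
  have key := card_powerfulPairs_le (u := X ^ (6 : ℝ)⁻¹) (r := x ^ (6 : ℝ)⁻¹)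
    (t := H ^ (3 * lam / 2))
    (one_le_rpow hX.le (by norm_num)) hH0.le
    (hHX.trans (rpow_le_rpow_of_exponent_le hX.le (by rw [one_div]; gcongr; linarith)))
    (rpow_le_rpow hX0.le hXx (by norm_num)) (by rw [hroot, hroot] <;> linarith)
    (div_pos (rpow_pos_of_pos hX0 _) (rpow_pos_of_pos hH0 _)) (one_le_rpow hH (by positivity))
    (by rw [hroot hX0.le]; exact rpow_one_third_div_rpow_cube_mul_sq hX0.le hH0)
    (by rw [hroot hX0.le]; exact sq_mul_rpow_sq_le_of_le_rpow hX.le hH0 hlam.le hHX)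
  rwa [hroot (by linarith), ← hsqrt] at key
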